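/- arXiv:1406.0724 — 4 statements merged into one kernel-verified Lean document; each statement's English description precedes it below -/
import Mathlib

section
/- Let (ξ_n) and (ε_n) be sequences in [0,+∞) such that ∑ ε_n < +∞ and ξ_{n+1} ≤ a·ξ_n + b·ξ_{n-1} + ε_n for all n ≥ 1, where a ∈ ℝ, b ≥ 0 and a + b < 1. Then ∑ ξ_n < +∞. -/
theorem stmt_1 (ξ ε : ℕ → ℝ) (hξ : ∀ n, 0 ≤ ξ n) (hε : ∀ n, 0 ≤ ε n)
    (hsum : Summable ε) (a b : ℝ) (hb : 0 ≤ b) (hab : a + b < 1)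
    (hrec : ∀ n, 1 ≤ n → ξ (n + 1) ≤ a * ξ n + b * ξ (n - 1) + ε n) :
    Summable ξ := by
  have hd0 : (0:ℝ) ≤ a^2 + 4*b := by positivity
  set d := Real.sqrt (a^2 + 4*b) with hddef
  have hdsq : d^2 = a^2 + 4*b := Real.sq_sqrt hd0
  have hdnn : 0 ≤ d := Real.sqrt_nonneg _
  set r := (a + d)/2 with hrdef
  set s := (a - d)/2 with hsdef
  have had : a ≤ d := by nlinarith [sq_nonneg (d - a), sq_nonneg (d + a)]
  have hnad : -a ≤ d := by nlinarith [sq_nonneg (d - a), sq_nonneg (d + a)]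
  have hr0 : 0 ≤ r := by rw [hrdef]; linarith
  have hr1 : r < 1 := by
    rw [hrdef]
    nlinarith [sq_nonneg (d - (2 - a))]
  have hs0 : s ≤ 0 := by rw [hsdef]; linarith
  have hrs_sum : r + s = a := by rw [hrdef, hsdef]; ring
  have hrs_prod : r * s = -b := by rw [hrdef, hsdef]; nlinarith [hdsq]
  set η := fun n => ξ (n+1) - s * ξ n with hηdef
  have hη0 : ∀ n, 0 ≤ η n := by
    intro n
    have : s * ξ n ≤ 0 := mul_nonpos_of_nonpos_of_nonneg hs0 (hξ n)
    simp only [hηdef]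
    linarith [hξ (n+1)]
  have hηrec : ∀ n, η (n+1) ≤ r * η n + ε (n+1) := by
    intro n
    have h := hrec (n+1) (by omega)
    simp only [Nat.add_sub_cancel] at h
    have h1 : r * s * ξ n = -b * ξ n := by rw [hrs_prod]
    have h2 : a - s = r := by linarith
    simp only [hηdef]
    calc ξ (n+1+1) - s * ξ (n+1) ≤ (a - s) * ξ (n+1) + b * ξ n + ε (n+1) := by linarith
      _ = r * (ξ (n+1) - s * ξ n) + ε (n+1) := by rw [h2]; nlinarith [h1]
  set E := ∑' n, ε n with hEdef
  have hεbound : ∀ N, ∑ i ∈ Finset.range N, ε (i+1) ≤ E := by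
    intro N
    have h1 : ∑ i ∈ Finset.range (N+1), ε i ≤ E :=
      Summable.sum_le_tsum (Finset.range (N+1)) (fun i _ => hε i) hsum
    have h2 : ∑ i ∈ Finset.range (N+1), ε i
        = ∑ i ∈ Finset.range N, ε (i+1) + ε 0 := Finset.sum_range_succ' ε N
    linarith [hε 0]
  have hTbound : ∀ N, ∑ n ∈ Finset.range N, η n ≤ (η 0 + E) / (1 - r) := by
    intro N
    rw [le_div_iff₀ (by linarith)]
    induction N with
    | zero =>
      simp
      have hE0 : 0 ≤ E := tsum_nonneg hε
      nlinarith [hη0 0]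
    | succ N _ =>
      have h1 : ∑ n ∈ Finset.range (N+1), η n
          = ∑ n ∈ Finset.range N, η (n+1) + η 0 := Finset.sum_range_succ' η N
      have h2 : ∑ n ∈ Finset.range N, η (n+1)
          ≤ ∑ n ∈ Finset.range N, (r * η n + ε (n+1)) :=
        Finset.sum_le_sum (fun i _ => hηrec i)
      rw [Finset.sum_add_distrib, ← Finset.mul_sum] at h2
      have h3 : ∑ n ∈ Finset.range N, η n ≤ ∑ n ∈ Finset.range (N+1), η n := by
        rw [Finset.sum_range_succ]; linarith [hη0 N]
      have h4 := hεbound N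
      nlinarith [Finset.sum_nonneg (fun i (_ : i ∈ Finset.range (N+1)) => hη0 i)]
  have hηsum : Summable η :=
    summable_of_sum_range_le hη0 hTbound
  have h1 : Summable (fun n => ξ (n+1)) := by
    apply hηsum.of_nonneg_of_le (fun n => hξ _)
    intro n
    have : s * ξ n ≤ 0 := mul_nonpos_of_nonpos_of_nonneg hs0 (hξ n)
    simp only [hηdef]
    linarith
  exact (summable_nat_add_iff 1).mp h1
end

section
/- In the setting of the inertial forward-backward-forward algorithm (f proper lsc bounded below, h differentiable with L_{∇h}-Lipschitz gradient, u σ-strongly convex with L_{∇u}-Lipschitz gradient, 0 < λ̲ ≤ λ_n ≤ λ̄, 0 ≤ α_n ≤ α), for every ν, μ > 0 and every n ≥ 2: (f+h)(p_n) + M₁·‖x_n - p_n‖² ≤ (f+h)(p_{n-1}) + M₂·‖x_{n-1} - p_{n-1}‖², where M₁ = σ/(2λ̄) - L_{∇h} - ν - (α/λ̲)·μ and M₂ = λ̄²·L_{∇h}²·(L_{∇h}²/(2ν) + ν + L_{∇h} + L_{∇u}/(2λ̲)) + (α/λ̲)·(μ·λ̄²·L_{∇h}² + (1 + λ̄·L_{∇h})²/(2μ)).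 -/
/-!
Compare the objective of the `n`-th subproblem at its minimiser `p n` with its value at `p (n - 1)`.
Strong convexity of `u` bounds the Bregman term at `p n` from below by `σ / 2 * ‖x n - p n‖ ^ 2`,
and the Lipschitz gradient of `u` bounds it at `p (n - 1)` from above. The descent lemma for `h`,
between `x n` and `p n` and between `p (n - 1)` and `x n`, converts the linear term
`⟪·, ∇h (x n)⟫` into values of `h` up to quadratic errors. The forward step gives
`‖x n - p (n - 1)‖ ≤ λ̄ L_{∇h} ‖x (n - 1) - p (n - 1)‖`, and with Young's inequality for the
inertial term every error is expressed through `‖x n - p n‖` and `‖x (n - 1) - p (n - 1)‖`.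
-/

open scoped RealInnerProductSpace

theorem EReal.add_coe_le_add_coe_of_le {a b : EReal} {c d e g : ℝ}
    (h₁ : a + c ≤ b + d) (h₂ : e + d ≤ g + c) : a + e ≤ b + g :=
  calc a + e = a + c + ((e - c : ℝ) : EReal) := by
        rw [add_assoc, ← EReal.coe_add, add_sub_cancel]
    _ ≤ b + d + ((e - c : ℝ) : EReal) := by gcongr
    _ = b + ((d + (e - c) : ℝ) : EReal) := by rw [add_assoc, EReal.coe_add]
    _ ≤ b + g := by gcongr; linarith

section Bregman

variable {E : Type*} [NormedAddCommGroup E] [InnerProductSpace ℝ E]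

def bregman (g : E → ℝ) (g' : E → E) (y x : E) : ℝ := g y - g x - ⟪g' x, y - x⟫

theorem bregman_sub (g₁ g₂ : E → ℝ) (g₁' g₂' : E → E) (y x : E) :
    bregman (fun w => g₁ w - g₂ w) (fun w => g₁' w - g₂' w) y x =
      bregman g₁ g₁' y x - bregman g₂ g₂' y x := by
  simp only [bregman, inner_sub_left]
  ring

theorem bregman_const_mul_norm_sq (c : ℝ) (y x : E) :
    bregman (fun w => c * ‖w‖ ^ 2) (fun w => (2 * c) • w) y x = c * ‖y - x‖ ^ 2 := by
  simp only [bregman, norm_sub_sq_real, real_inner_smul_left, inner_sub_right,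
    real_inner_self_eq_norm_sq, real_inner_comm x y]
  ring

theorem inner_sub_le_of_lipschitz {g' : E → E} {L : ℝ} (hlip : ∀ z w, ‖g' z - g' w‖ ≤ L * ‖z - w‖)
    (z w v : E) : ⟪g' z - g' w, v⟫ ≤ L * ‖z - w‖ * ‖v‖ :=
  (real_inner_le_norm _ _).trans (mul_le_mul_of_nonneg_right (hlip z w) (norm_nonneg v))

variable [CompleteSpace E]

theorem HasGradientAt.sub {f₁ f₂ : E → ℝ} {a b x : E} (h₁ : HasGradientAt f₁ a x)
    (h₂ : HasGradientAt f₂ b x) : HasGradientAt (fun w => f₁ w - f₂ w) (a - b) x := by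
  rw [hasGradientAt_iff_hasFDerivAt, map_sub]
  exact h₁.hasFDerivAt.sub h₂.hasFDerivAt

theorem hasGradientAt_const_mul_norm_sq (c : ℝ) (x : E) :
    HasGradientAt (fun w => c * ‖w‖ ^ 2) ((2 * c) • x) x := by
  rw [hasGradientAt_iff_hasFDerivAt]
  refine ((hasStrictFDerivAt_norm_sq x).hasFDerivAt.const_mul c).congr_fderiv ?_
  ext v
  simp
  ring

theorem HasGradientAt.hasDerivAt_comp_add_smul {g : E → ℝ} {g' x v : E} {t : ℝ}
    (hg : HasGradientAt g g' (x + t • v)) :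
    HasDerivAt (fun s : ℝ => g (x + s • v)) ⟪g', v⟫ t := by
  have hline : HasDerivAt (fun s : ℝ => x + s • v) v t := by
    simpa using ((hasDerivAt_id t).smul_const v).const_add x
  have := hg.hasFDerivAt.comp_hasDerivAt t hline
  simp only [Function.comp_def, InnerProductSpace.toDual_apply_apply] at this
  exact this

theorem ConvexOn.bregman_nonneg {g : E → ℝ} {g' : E → E} (hc : ConvexOn ℝ Set.univ g) {x : E}
    (hg : HasGradientAt g (g' x) x) (y : E) : 0 ≤ bregman g g' y x := by
  have hline : ConvexOn ℝ Set.univ (fun s : ℝ => g (x + s • (y - x))) := by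
    simpa [Function.comp_def, AffineMap.lineMap_apply, add_comm]
      using hc.comp_affineMap (AffineMap.lineMap x y)
  have hderiv : HasDerivAt (fun s : ℝ => g (x + s • (y - x))) ⟪g' x, y - x⟫ 0 :=
    HasGradientAt.hasDerivAt_comp_add_smul (by simpa using hg)
  have hslope := hline.le_slope_of_hasDerivAt (Set.mem_univ 0) (Set.mem_univ 1) one_pos hderiv
  simp only [slope_def_field, one_smul, zero_smul, add_zero, sub_zero, div_one,
    add_sub_cancel] at hslope
  unfold bregman
  linarith

theorem bregman_nonneg_of_monotone_gradient {g : E → ℝ} {g' : E → E}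
    (hg : ∀ z, HasGradientAt g (g' z) z) (hm : ∀ z w, 0 ≤ ⟪g' z - g' w, z - w⟫) (y x : E) :
    0 ≤ bregman g g' y x := by
  set v := y - x
  have hφ : ∀ s : ℝ, HasDerivAt (fun s : ℝ => g (x + s • v) - s * ⟪g' x, v⟫)
      ⟪g' (x + s • v) - g' x, v⟫ s := fun s => by
    rw [inner_sub_left]
    exact (hg _).hasDerivAt_comp_add_smul.sub (hasDerivAt_mul_const _)
  have hmono : MonotoneOn (fun s : ℝ => g (x + s • v) - s * ⟪g' x, v⟫) (Set.Ici 0) := by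
    refine monotoneOn_of_deriv_nonneg (convex_Ici 0)
      (fun s _ => (hφ s).continuousAt.continuousWithinAt)
      (fun s _ => (hφ s).differentiableAt.differentiableWithinAt) fun s hs => ?_
    rw [interior_Ici, Set.mem_Ioi] at hs
    have := hm (x + s • v) x
    rw [add_sub_cancel_left, inner_smul_right] at this
    rw [(hφ s).deriv]
    exact nonneg_of_mul_nonneg_right this hs
  have := hmono Set.self_mem_Ici (Set.mem_Ici.2 zero_le_one) zero_le_one
  simp only [zero_smul, add_zero, zero_mul, sub_zero, one_smul, one_mul, v,
    add_sub_cancel] at this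
  unfold bregman
  linarith

theorem mul_sq_norm_le_bregman {u : E → ℝ} {u' : E → E} (hu : ∀ z, HasGradientAt u (u' z) z)
    {σ : ℝ} (hconv : ConvexOn ℝ Set.univ (fun z => u z - σ / 2 * ‖z‖ ^ 2)) (y x : E) :
    σ / 2 * ‖y - x‖ ^ 2 ≤ bregman u u' y x := by
  have := hconv.bregman_nonneg ((hu x).sub (hasGradientAt_const_mul_norm_sq (σ / 2) x)) y
    (g' := fun w => u' w - (2 * (σ / 2)) • w)
  rw [bregman_sub, bregman_const_mul_norm_sq] at this
  linarith

theorem bregman_le_mul_sq_norm {g : E → ℝ} {g' : E → E} (hg : ∀ z, HasGradientAt g (g' z) z)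
    {L : ℝ} (hlip : ∀ z w, ‖g' z - g' w‖ ≤ L * ‖z - w‖) (y x : E) :
    bregman g g' y x ≤ L / 2 * ‖y - x‖ ^ 2 := by
  have := bregman_nonneg_of_monotone_gradient
    (fun z => (hasGradientAt_const_mul_norm_sq (L / 2) z).sub (hg z)) (fun z w => by
      have := inner_sub_le_of_lipschitz hlip z w (z - w)
      rw [sub_sub_sub_comm, ← smul_sub, inner_sub_left, real_inner_smul_left,
        real_inner_self_eq_norm_sq]
      nlinarith) y x
  rw [bregman_sub, bregman_const_mul_norm_sq] at this
  linarith

end Bregman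

section InertialFBF

variable {E : Type*} [NormedAddCommGroup E] [InnerProductSpace ℝ E]

theorem inner_sub_le_of_norm_sub_le {P Q X X' : E} {c μ : ℝ} (hμ : 0 < μ)
    (hR : ‖X - Q‖ ≤ c * ‖X' - Q‖) :
    ⟪Q - P, X' - X⟫ ≤ μ * ‖X - P‖ ^ 2 + (μ * c ^ 2 + (1 + c) ^ 2 / (2 * μ)) * ‖X' - Q‖ ^ 2 := by
  have hQP : ‖Q - P‖ ≤ ‖X - Q‖ + ‖X - P‖ := by
    rw [norm_sub_rev X Q]; exact norm_sub_le_norm_sub_add_norm_sub Q X P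
  have hX'X : ‖X' - X‖ ≤ ‖X' - Q‖ + ‖X - Q‖ := by
    rw [norm_sub_rev X Q]; exact norm_sub_le_norm_sub_add_norm_sub X' Q X
  have hR₀ := norm_nonneg (X - Q)
  have hT₀ := norm_nonneg (X - P)
  calc ⟪Q - P, X' - X⟫ ≤ ‖Q - P‖ * ‖X' - X‖ := real_inner_le_norm _ _
    _ ≤ (c * ‖X' - Q‖ + ‖X - P‖) * ((1 + c) * ‖X' - Q‖) :=
        mul_le_mul (by linarith) (by linarith) (norm_nonneg _) (by linarith)
    _ ≤ μ * ‖X - P‖ ^ 2 + (μ * c ^ 2 + (1 + c) ^ 2 / (2 * μ)) * ‖X' - Q‖ ^ 2 := by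
        rw [← sub_nonneg]
        have hYoung : μ * ‖X - P‖ ^ 2 + (μ * c ^ 2 + (1 + c) ^ 2 / (2 * μ)) * ‖X' - Q‖ ^ 2 -
            (c * ‖X' - Q‖ + ‖X - P‖) * ((1 + c) * ‖X' - Q‖) =
            ((2 * μ * ‖X - P‖ - (1 + c) * ‖X' - Q‖) ^ 2 +
              (2 * μ * c * ‖X' - Q‖ - (1 + c) * ‖X' - Q‖) ^ 2) / (4 * μ) := by
          field_simp
          ring
        rw [hYoung]
        positivity

theorem norm_sub_le_of_forward_step {h' : E → E} {L lam lamU : ℝ}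
    (hlip : ∀ z w, ‖h' z - h' w‖ ≤ L * ‖z - w‖) (hlam : 0 ≤ lam) (hlamU : lam ≤ lamU)
    {Q X X' : E} (hX : X = Q + lam • (h' X' - h' Q)) : ‖X - Q‖ ≤ lamU * L * ‖X' - Q‖ := by
  rw [hX, add_sub_cancel_left, norm_smul, Real.norm_of_nonneg hlam, mul_assoc]
  exact mul_le_mul hlamU (hlip X' Q) (norm_nonneg _) (hlam.trans hlamU)

/-- The smooth part of the subproblem defining `p n`, with `x = x n` and `xPrev = x (n - 1)`. -/
noncomputable def inertialModel (u : E → ℝ) (u' h' : E → E) (lam al : ℝ) (xPrev x y : E) : ℝ :=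
  1 / lam * bregman u u' y x + ⟪y, h' x⟫ + al / lam * ⟪y, xPrev - x⟫

variable [CompleteSpace E] {h u : E → ℝ} {h' u' : E → E} {Lh Lu σ : ℝ}

theorem inertialModel_descent (hh : ∀ z, HasGradientAt h (h' z) z)
    (hlip_h : ∀ z w, ‖h' z - h' w‖ ≤ Lh * ‖z - w‖) (hu : ∀ z, HasGradientAt u (u' z) z)
    (hlip_u : ∀ z w, ‖u' z - u' w‖ ≤ Lu * ‖z - w‖) (hLu : 0 ≤ Lu)
    (hconv : ConvexOn ℝ Set.univ (fun z => u z - σ / 2 * ‖z‖ ^ 2)) (hσ : 0 ≤ σ)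
    {lamL lamU lam al α μ c : ℝ}
    (hlamL : 0 < lamL) (hlam : lamL ≤ lam) (hlamU : lam ≤ lamU) (hal : 0 ≤ al) (halα : al ≤ α)
    (hμ : 0 < μ) {P Q X X' : E} (hR : ‖X - Q‖ ≤ c * ‖X' - Q‖) :
    h P + (σ / (2 * lamU) - Lh / 2 - α / lamL * μ) * ‖X - P‖ ^ 2 +
        inertialModel u u' h' lam al X' X Q ≤
      h Q + (Lu / (2 * lamL) + 3 / 2 * Lh) * ‖X - Q‖ ^ 2 +
        α / lamL * (μ * c ^ 2 + (1 + c) ^ 2 / (2 * μ)) * ‖X' - Q‖ ^ 2 +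
        inertialModel u u' h' lam al X' X P := by
  have hlam₀ : 0 < lam := hlamL.trans_le hlam
  have hα : 0 ≤ α := hal.trans halα
  have hstrong : σ / (2 * lamU) * ‖X - P‖ ^ 2 ≤ 1 / lam * bregman u u' P X :=
    calc σ / (2 * lamU) * ‖X - P‖ ^ 2 = 1 / lamU * (σ / 2 * ‖P - X‖ ^ 2) := by
          rw [norm_sub_rev]; ring
      _ ≤ 1 / lam * (σ / 2 * ‖P - X‖ ^ 2) := by gcongr
      _ ≤ 1 / lam * bregman u u' P X := by gcongr; exact mul_sq_norm_le_bregman hu hconv P X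
  have hsmooth : 1 / lam * bregman u u' Q X ≤ Lu / (2 * lamL) * ‖X - Q‖ ^ 2 :=
    calc 1 / lam * bregman u u' Q X ≤ 1 / lam * (Lu / 2 * ‖Q - X‖ ^ 2) := by
          gcongr; exact bregman_le_mul_sq_norm hu hlip_u Q X
      _ ≤ 1 / lamL * (Lu / 2 * ‖Q - X‖ ^ 2) := by gcongr
      _ = Lu / (2 * lamL) * ‖X - Q‖ ^ 2 := by rw [norm_sub_rev]; ring
  have hinertial : al / lam * ⟪Q - P, X' - X⟫ ≤
      α / lamL * (μ * ‖X - P‖ ^ 2 + (μ * c ^ 2 + (1 + c) ^ 2 / (2 * μ)) * ‖X' - Q‖ ^ 2) :=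
    calc al / lam * ⟪Q - P, X' - X⟫ ≤
        al / lam * (μ * ‖X - P‖ ^ 2 + (μ * c ^ 2 + (1 + c) ^ 2 / (2 * μ)) * ‖X' - Q‖ ^ 2) := by
          gcongr; exact inner_sub_le_of_norm_sub_le hμ hR
      _ ≤ _ := by gcongr
  have hdesc₁ := bregman_le_mul_sq_norm hh hlip_h P X
  have hdesc₂ := bregman_le_mul_sq_norm hh hlip_h X Q
  have hcross := inner_sub_le_of_lipschitz hlip_h Q X (X - Q)
  have hlinear : ⟪Q, h' X⟫ - ⟪P, h' X⟫ + ⟪h' X, P - X⟫ + ⟪h' Q, X - Q⟫ =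
      ⟪h' Q - h' X, X - Q⟫ := by
    simp only [inner_sub_left, inner_sub_right, real_inner_comm (h' X)]
    ring
  rw [norm_sub_rev P X] at hdesc₁
  rw [norm_sub_rev Q X] at hcross
  rw [inner_sub_left, mul_sub] at hinertial
  unfold inertialModel
  unfold bregman at hdesc₁ hdesc₂
  linarith

theorem inertialModel_sufficient_decrease (hh : ∀ z, HasGradientAt h (h' z) z)
    (hLh : 0 ≤ Lh) (hlip_h : ∀ z w, ‖h' z - h' w‖ ≤ Lh * ‖z - w‖)
    (hu : ∀ z, HasGradientAt u (u' z) z) (hlip_u : ∀ z w, ‖u' z - u' w‖ ≤ Lu * ‖z - w‖)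
    (hLu : 0 ≤ Lu) (hconv : ConvexOn ℝ Set.univ (fun z => u z - σ / 2 * ‖z‖ ^ 2)) (hσ : 0 ≤ σ)
    {lamL lamU lam lam' al α ν μ : ℝ} (hlamL : 0 < lamL) (hlam : lamL ≤ lam) (hlamU : lam ≤ lamU)
    (hlam' : lamL ≤ lam') (hlamU' : lam' ≤ lamU) (hal : 0 ≤ al) (halα : al ≤ α)
    (hν : 0 < ν) (hμ : 0 < μ) {P Q X X' : E} (hX : X = Q + lam' • (h' X' - h' Q)) :
    h P + (σ / (2 * lamU) - Lh - ν - α / lamL * μ) * ‖X - P‖ ^ 2 +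
        inertialModel u u' h' lam al X' X Q ≤
      h Q + (lamU ^ 2 * Lh ^ 2 * (Lh ^ 2 / (2 * ν) + ν + Lh + Lu / (2 * lamL)) +
          α / lamL * (μ * lamU ^ 2 * Lh ^ 2 + (1 + lamU * Lh) ^ 2 / (2 * μ))) * ‖X' - Q‖ ^ 2 +
        inertialModel u u' h' lam al X' X P := by
  have hR := norm_sub_le_of_forward_step hlip_h (hlamL.le.trans hlam') hlamU' hX
  have hdescent := inertialModel_descent hh hlip_h hu hlip_u hLu hconv hσ hlamL hlam hlamU hal
    halα hμ (P := P) hR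
  have hAMGM : Lh / 2 ≤ Lh ^ 2 / (2 * ν) + ν := by
    rw [div_add' _ _ _ (by positivity), le_div_iff₀ (by positivity)]
    nlinarith [sq_nonneg (Lh - ν)]
  have hRD : (Lu / (2 * lamL) + 3 / 2 * Lh) * ‖X - Q‖ ^ 2 ≤
      (Lh ^ 2 / (2 * ν) + ν + Lh + Lu / (2 * lamL)) * (lamU * Lh) ^ 2 * ‖X' - Q‖ ^ 2 :=
    calc (Lu / (2 * lamL) + 3 / 2 * Lh) * ‖X - Q‖ ^ 2
        ≤ (Lu / (2 * lamL) + 3 / 2 * Lh) * (lamU * Lh * ‖X' - Q‖) ^ 2 := by gcongr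
      _ ≤ (Lh ^ 2 / (2 * ν) + ν + Lh + Lu / (2 * lamL)) * (lamU * Lh * ‖X' - Q‖) ^ 2 := by
          gcongr ?_ * _; linarith
      _ = _ := by ring
  have hT : (-Lh - ν) * ‖X - P‖ ^ 2 ≤ -(Lh / 2) * ‖X - P‖ ^ 2 := by
    gcongr; linarith
  linarith

end InertialFBF

theorem stmt_12_general {m : ℕ} (f : EuclideanSpace ℝ (Fin m) → EReal)
    (h : EuclideanSpace ℝ (Fin m) → ℝ)
    (h' : EuclideanSpace ℝ (Fin m) → EuclideanSpace ℝ (Fin m))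
    (hdiffh : ∀ z, HasGradientAt h (h' z) z)
    (Lh : ℝ) (hLh : 0 ≤ Lh)
    (hliph : ∀ z w, ‖h' z - h' w‖ ≤ Lh * ‖z - w‖)
    (u : EuclideanSpace ℝ (Fin m) → ℝ)
    (u' : EuclideanSpace ℝ (Fin m) → EuclideanSpace ℝ (Fin m))
    (hdiffu : ∀ z, HasGradientAt u (u' z) z)
    (σ : ℝ) (hσ : 0 < σ)
    (hconv : ConvexOn ℝ Set.univ (fun z => u z - σ / 2 * ‖z‖ ^ 2))
    (Lu : ℝ) (hLu : 0 < Lu)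
    (hlipu : ∀ z w, ‖u' z - u' w‖ ≤ Lu * ‖z - w‖)
    (lamL lamU α : ℝ) (hlamL : 0 < lamL)
    (lam al : ℕ → ℝ)
    (hlam : ∀ n, 1 ≤ n → lamL ≤ lam n ∧ lam n ≤ lamU)
    (hal : ∀ n, 1 ≤ n → 0 ≤ al n ∧ al n ≤ α)
    (x p : ℕ → EuclideanSpace ℝ (Fin m))
    (hargmin : ∀ n, 1 ≤ n → ∀ y,
      f (p n) + ((1 / lam n * (u (p n) - u (x n) - (inner ℝ (u' (x n)) (p n - x n) : ℝ)) +
        (inner ℝ (p n) (h' (x n)) : ℝ) +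
        al n / lam n * (inner ℝ (p n) (x (n - 1) - x n) : ℝ) : ℝ) : EReal) ≤
      f y + ((1 / lam n * (u y - u (x n) - (inner ℝ (u' (x n)) (y - x n) : ℝ)) +
        (inner ℝ y (h' (x n)) : ℝ) +
        al n / lam n * (inner ℝ y (x (n - 1) - x n) : ℝ) : ℝ) : EReal))
    (hupd : ∀ n, 1 ≤ n → x (n + 1) = p n + lam n • (h' (x n) - h' (p n)))
    (ν μ : ℝ) (hν : 0 < ν) (hμ : 0 < μ) :
    ∀ n, 2 ≤ n →
      f (p n) + ((h (p n) +
          (σ / (2 * lamU) - Lh - ν - α / lamL * μ) * ‖x n - p n‖ ^ 2 : ℝ) : EReal) ≤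
      f (p (n - 1)) + ((h (p (n - 1)) +
          (lamU ^ 2 * Lh ^ 2 * (Lh ^ 2 / (2 * ν) + ν + Lh + Lu / (2 * lamL)) +
            α / lamL * (μ * lamU ^ 2 * Lh ^ 2 + (1 + lamU * Lh) ^ 2 / (2 * μ))) *
            ‖x (n - 1) - p (n - 1)‖ ^ 2 : ℝ) : EReal) := by
  intro n hn
  obtain ⟨hlam_n, hlamU_n⟩ := hlam n (by omega)
  obtain ⟨hlam_pred, hlamU_pred⟩ := hlam (n - 1) (by omega)
  obtain ⟨hal_n, halα_n⟩ := hal n (by omega)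
  have hforward := hupd (n - 1) (by omega)
  rw [Nat.sub_add_cancel (by omega : 1 ≤ n)] at hforward
  exact EReal.add_coe_le_add_coe_of_le (hargmin n (by omega) (p (n - 1)))
    (inertialModel_sufficient_decrease hdiffh hLh hliph hdiffu hlipu hLu.le hconv hσ.le hlamL
      hlam_n hlamU_n hlam_pred hlamU_pred hal_n halα_n hν hμ hforward)

theorem stmt_12 {m : ℕ} (f : EuclideanSpace ℝ (Fin m) → EReal)
    (hproper : ∃ z, f z ≠ ⊤) (hbot : ∀ z, f z ≠ ⊥)
    (hlsc : LowerSemicontinuous f)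
    (hfbdd : ∃ M : ℝ, ∀ z, (M : EReal) ≤ f z)
    (h : EuclideanSpace ℝ (Fin m) → ℝ)
    (h' : EuclideanSpace ℝ (Fin m) → EuclideanSpace ℝ (Fin m))
    (hdiffh : ∀ z, HasGradientAt h (h' z) z)
    (Lh : ℝ) (hLh : 0 ≤ Lh)
    (hliph : ∀ z w, ‖h' z - h' w‖ ≤ Lh * ‖z - w‖)
    (u : EuclideanSpace ℝ (Fin m) → ℝ)
    (u' : EuclideanSpace ℝ (Fin m) → EuclideanSpace ℝ (Fin m))
    (hdiffu : ∀ z, HasGradientAt u (u' z) z)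
    (σ : ℝ) (hσ : 0 < σ)
    (hconv : ConvexOn ℝ Set.univ (fun z => u z - σ / 2 * ‖z‖ ^ 2))
    (Lu : ℝ) (hLu : 0 < Lu)
    (hlipu : ∀ z w, ‖u' z - u' w‖ ≤ Lu * ‖z - w‖)
    (lamL lamU α : ℝ) (hlamL : 0 < lamL) (hα : 0 ≤ α)
    (lam al : ℕ → ℝ)
    (hlam : ∀ n, 1 ≤ n → lamL ≤ lam n ∧ lam n ≤ lamU)
    (hal : ∀ n, 1 ≤ n → 0 ≤ al n ∧ al n ≤ α)
    (x p : ℕ → EuclideanSpace ℝ (Fin m))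
    (hargmin : ∀ n, 1 ≤ n → ∀ y,
      f (p n) + ((1 / lam n * (u (p n) - u (x n) - (inner ℝ (u' (x n)) (p n - x n) : ℝ)) +
        (inner ℝ (p n) (h' (x n)) : ℝ) +
        al n / lam n * (inner ℝ (p n) (x (n - 1) - x n) : ℝ) : ℝ) : EReal) ≤
      f y + ((1 / lam n * (u y - u (x n) - (inner ℝ (u' (x n)) (y - x n) : ℝ)) +
        (inner ℝ y (h' (x n)) : ℝ) +
        al n / lam n * (inner ℝ y (x (n - 1) - x n) : ℝ) : ℝ) : EReal))
    (hupd : ∀ n, 1 ≤ n → x (n + 1) = p n + lam n • (h' (x n) - h' (p n)))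
    (ν μ : ℝ) (hν : 0 < ν) (hμ : 0 < μ) :
    ∀ n, 2 ≤ n →
      f (p n) + ((h (p n) +
          (σ / (2 * lamU) - Lh - ν - α / lamL * μ) * ‖x n - p n‖ ^ 2 : ℝ) : EReal) ≤
      f (p (n - 1)) + ((h (p (n - 1)) +
          (lamU ^ 2 * Lh ^ 2 * (Lh ^ 2 / (2 * ν) + ν + Lh + Lu / (2 * lamL)) +
            α / lamL * (μ * lamU ^ 2 * Lh ^ 2 + (1 + lamU * Lh) ^ 2 / (2 * μ))) *
            ‖x (n - 1) - p (n - 1)‖ ^ 2 : ℝ) : EReal) :=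
  stmt_12_general f h h' hdiffh Lh hLh hliph u u' hdiffu σ hσ hconv Lu hLu hlipu lamL lamU α hlamL
    lam al hlam hal x p hargmin hupd ν μ hν hμ
end

section
/- Suppose F : ℝ^m → (-∞, +∞] is bounded below and sequences (p_n), (x_n) in ℝ^m and constants M₁ > M₂ ≥ 0 satisfy F(p_n) + M₁·‖x_n - p_n‖² ≤ F(p_{n-1}) + M₂·‖x_{n-1} - p_{n-1}‖² for all n ≥ 2. Then (i) ∑ ‖x_n - p_n‖² < +∞; (ii) the sequence F(p_n) + M₂·‖x_n - p_n‖² is monotonically decreasing and convergent; (iii) F(p_n) is convergent. -/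
open Filter Topology

theorem stmt_14 {m : ℕ} (F : EuclideanSpace ℝ (Fin m) → EReal)
    (hbdd : ∃ M : ℝ, ∀ z, (M : EReal) ≤ F z)
    (p x : ℕ → EuclideanSpace ℝ (Fin m))
    (M₁ M₂ : ℝ) (hM : M₂ < M₁) (hM₂ : 0 ≤ M₂)
    (hfin : ∀ n, F (p n) ≠ ⊤)
    (hdec : ∀ n, 1 ≤ n →
      F (p n) + ((M₁ * ‖x n - p n‖ ^ 2 : ℝ) : EReal) ≤
      F (p (n - 1)) + ((M₂ * ‖x (n - 1) - p (n - 1)‖ ^ 2 : ℝ) : EReal)) :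
    Summable (fun n => ‖x n - p n‖ ^ 2) ∧
    (Antitone (fun n => F (p n) + ((M₂ * ‖x n - p n‖ ^ 2 : ℝ) : EReal)) ∧
      ∃ l : EReal, Tendsto (fun n => F (p n) + ((M₂ * ‖x n - p n‖ ^ 2 : ℝ) : EReal))
        atTop (𝓝 l)) ∧
    ∃ l : EReal, Tendsto (fun n => F (p n)) atTop (𝓝 l) := by
  obtain ⟨M, hbdd⟩ := hbdd
  set f : ℕ → ℝ := fun n => (F (p n)).toReal with hfdef
  have hne : ∀ n, F (p n) = ((f n : ℝ) : EReal) := by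
    intro n
    refine (EReal.coe_toReal (hfin n) ?_).symm
    intro h
    have := hbdd (p n)
    rw [h] at this
    exact (EReal.bot_lt_coe M).not_ge this
  set a : ℕ → ℝ := fun n => ‖x n - p n‖ ^ 2 with hadef
  have ha0 : ∀ n, 0 ≤ a n := fun n => sq_nonneg _
  have hfM : ∀ n, M ≤ f n := by
    intro n
    have := hbdd (p n)
    rw [hne n] at this
    exact_mod_cast this
  have hdec' : ∀ n, f (n + 1) + M₁ * a (n + 1) ≤ f n + M₂ * a n := by
    intro n
    have h := hdec (n + 1) (Nat.le_add_left 1 n)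
    simp only [Nat.add_sub_cancel] at h
    rw [hne (n + 1), hne n, ← EReal.coe_add, ← EReal.coe_add, EReal.coe_le_coe_iff] at h
    exact h
  set g : ℕ → ℝ := fun n => f n + M₂ * a n with hgdef
  have hg_anti : Antitone g := by
    refine antitone_nat_of_succ_le fun n => ?_
    have h1 := hdec' n
    have h2 := ha0 (n + 1)
    simp only [hgdef]
    nlinarith
  have hgM : ∀ n, M ≤ g n := by
    intro n
    have := hfM n
    have := ha0 n
    simp only [hgdef]
    nlinarith
  have key : ∀ n, (M₁ - M₂) * a (n + 1) ≤ g n - g (n + 1) := by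
    intro n
    have := hdec' n
    simp only [hgdef]
    nlinarith
  have hsum1 : Summable fun n => a (n + 1) := by
    refine summable_of_sum_range_le (c := (g 0 - M) / (M₁ - M₂))
      (fun n => ha0 (n + 1)) fun N => ?_
    have htel : ∑ k ∈ Finset.range N, (g k - g (k + 1)) = g 0 - g N :=
      Finset.sum_range_sub' g N
    have h1 : (M₁ - M₂) * ∑ k ∈ Finset.range N, a (k + 1) ≤ g 0 - g N := by
      rw [Finset.mul_sum, ← htel]
      exact Finset.sum_le_sum fun k _ => key k
    have h2 := hgM N
    rw [le_div_iff₀ (by linarith)]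
    nlinarith
  have hsumA : Summable a := (summable_nat_add_iff 1).mp hsum1
  have ha_lim : Tendsto a atTop (𝓝 0) := hsumA.tendsto_atTop_zero
  have hg_lim : Tendsto g atTop (𝓝 (⨅ n, g n)) :=
    tendsto_atTop_ciInf hg_anti ⟨M, by rintro _ ⟨n, rfl⟩; exact hgM n⟩
  have hf_lim : Tendsto f atTop (𝓝 (⨅ n, g n)) := by
    have h := hg_lim.sub (ha_lim.const_mul M₂)
    simp only [mul_zero, sub_zero] at h
    have hfe : f = fun n => g n - M₂ * a n := by
      funext n; simp only [hgdef]; ring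
    rw [hfe]
    exact h
  have heq : (fun n => F (p n) + ((M₂ * ‖x n - p n‖ ^ 2 : ℝ) : EReal)) =
      fun n => ((g n : ℝ) : EReal) := by
    funext n
    rw [hne n, ← EReal.coe_add]
  refine ⟨hsumA, ⟨?_, ?_⟩, ?_⟩
  · rw [heq]
    exact fun i j h => EReal.coe_le_coe_iff.2 (hg_anti h)
  · exact ⟨((⨅ n, g n : ℝ) : EReal), by rw [heq]; exact EReal.tendsto_coe.2 hg_lim⟩
  · refine ⟨((⨅ n, g n : ℝ) : EReal), ?_⟩
    have : (fun n => F (p n)) = fun n => ((f n : ℝ) : EReal) := funext hne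
    rw [this]
    exact EReal.tendsto_coe.2 hf_lim
end

section
/- In the setting of the inertial forward-backward-forward algorithm with f, h proper/differentiable as in Problem 1, for every n ≥ 2 the vector s_n = (1/λ_n)(∇u(x_n) - ∇u(p_n)) + ∇h(p_n) - ∇h(x_n) + (α_n/λ_n)(p_{n-1} - x_{n-1}) + (α_n λ_{n-1}/λ_n)(∇h(x_{n-1}) - ∇h(p_{n-1})) belongs to ∂(f+h)(p_n), and ‖s_n‖ ≤ (L_{∇u}/λ_n + L_{∇h})·‖x_n - p_n‖ + (α_n/λ_n)(1 + λ_{n-1}L_{∇h})·‖x_{n-1} - p_{n-1}‖. -/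
open Filter Topology

noncomputable section

variable {E : Type*} [NormedAddCommGroup E] [InnerProductSpace ℝ E]

/-- The Fréchet (viscosity) subdifferential of an extended-real-valued function. -/
def frechetSubdiff (f : E → EReal) (x : E) : Set E :=
  {v | f x ≠ ⊤ ∧ ∀ ε : ℝ, 0 < ε →
    ∀ᶠ y in 𝓝 x,
      f x + ((inner ℝ v (y - x) : ℝ) : EReal) - ((ε * ‖y - x‖ : ℝ) : EReal) ≤ f y}

/-- The limiting (Mordukhovich) subdifferential. -/
def limitingSubdiff (f : E → EReal) (x : E) : Set E :=
  {v | ∃ xs vs : ℕ → E,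
    Tendsto xs atTop (𝓝 x) ∧
    Tendsto (fun n => f (xs n)) atTop (𝓝 (f x)) ∧
    (∀ n, vs n ∈ frechetSubdiff f (xs n)) ∧
    Tendsto vs atTop (𝓝 v)}

end

/-!
The proximal step makes `p n` a global minimiser of `f + g`, where `g` is `u / lam n` plus
an affine function. Fermat's rule puts `-∇g (p n)` in the Fréchet subdifferential of `f`, and adding
the smooth `h` gives `∇h (p n) - ∇g (p n) ∈ ∂̂(f + h)(p n) ⊆ ∂(f + h)(p n)`. Substituting the forward
step `x n = p (n - 1) + lam (n - 1) • (∇h (x (n - 1)) - ∇h (p (n - 1)))` turns this vector into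
`s n`; the norm bound is the triangle inequality together with the Lipschitz bounds on `∇u`, `∇h`.
-/

open scoped RealInnerProductSpace

section FrechetSubdiff

variable {E : Type*} [NormedAddCommGroup E] [InnerProductSpace ℝ E]

theorem mem_frechetSubdiff_iff {F : E → EReal} {v x : E} :
    v ∈ frechetSubdiff F x ↔ F x ≠ ⊤ ∧ ∀ ε : ℝ, 0 < ε →
      ∀ᶠ y in 𝓝 x, F x + ((⟪v, y - x⟫ - ε * ‖y - x‖ : ℝ) : EReal) ≤ F y := by
  have hcoe : ∀ (a b : ℝ), F x + (a : EReal) - (b : EReal) = F x + ((a - b : ℝ) : EReal) := by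
    intro a b
    rw [sub_eq_add_neg, add_assoc, ← EReal.coe_neg, ← EReal.coe_add, ← sub_eq_add_neg]
  simp only [frechetSubdiff, Set.mem_ofPred_eq, hcoe]

theorem neg_mem_frechetSubdiff_of_isLocalMin_add [CompleteSpace E] {F : E → EReal} {g : E → ℝ}
    {w p : E}
    (hmin : IsLocalMin (fun y => F y + (g y : EReal)) p) (hFp : F p ≠ ⊤)
    (hg : HasGradientAt g w p) : -w ∈ frechetSubdiff F p := by
  refine mem_frechetSubdiff_iff.2 ⟨hFp, fun ε hε => ?_⟩
  filter_upwards [hmin, (hasGradientAt_iff_isLittleO.1 hg).def hε] with y hy hgy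
  have hlin : ⟪-w, y - p⟫ - ε * ‖y - p‖ ≤ g p + -g y := by
    rw [Real.norm_eq_abs, abs_le] at hgy
    rw [inner_neg_left]
    linarith [hgy.1]
  calc F p + ((⟪-w, y - p⟫ - ε * ‖y - p‖ : ℝ) : EReal)
      ≤ F p + ((g p + -g y : ℝ) : EReal) := by gcongr
    _ = F p + (g p : EReal) + ((-g y : ℝ) : EReal) := by rw [EReal.coe_add, add_assoc]
    _ ≤ F y + (g y : EReal) + ((-g y : ℝ) : EReal) := by gcongr
    _ = F y := by rw [add_assoc, ← EReal.coe_add, add_neg_cancel, EReal.coe_zero, add_zero]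

theorem add_mem_frechetSubdiff_add [CompleteSpace E] {F : E → EReal} {h : E → ℝ} {v w p : E}
    (hv : v ∈ frechetSubdiff F p) (hh : HasGradientAt h w p) :
    v + w ∈ frechetSubdiff (fun y => F y + (h y : EReal)) p := by
  obtain ⟨hFp, hF⟩ := mem_frechetSubdiff_iff.1 hv
  refine mem_frechetSubdiff_iff.2
    ⟨(EReal.add_lt_top hFp (EReal.coe_ne_top _)).ne, fun ε hε => ?_⟩
  filter_upwards [hF (ε / 2) (half_pos hε),
    (hasGradientAt_iff_isLittleO.1 hh).def (half_pos hε)] with y hFy hhy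
  have hlin : h p + (⟪v + w, y - p⟫ - ε * ‖y - p‖) - (⟪v, y - p⟫ - ε / 2 * ‖y - p‖) ≤ h y := by
    rw [Real.norm_eq_abs, abs_le] at hhy
    rw [inner_add_left]
    linarith [hhy.1]
  calc F p + (h p : EReal) + ((⟪v + w, y - p⟫ - ε * ‖y - p‖ : ℝ) : EReal)
      = F p + ((⟪v, y - p⟫ - ε / 2 * ‖y - p‖ : ℝ) : EReal) +
          ((h p + (⟪v + w, y - p⟫ - ε * ‖y - p‖) - (⟪v, y - p⟫ - ε / 2 * ‖y - p‖) : ℝ) :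
            EReal) := by
        rw [add_assoc, add_assoc, ← EReal.coe_add, ← EReal.coe_add]
        congr 2
        ring
    _ ≤ F y + (h y : EReal) := by gcongr

theorem ne_top_of_forall_add_coe_le {α : Type*} {F : α → EReal} {g : α → ℝ} {p : α}
    (hmin : ∀ y, F p + (g p : EReal) ≤ F y + (g y : EReal)) (hF : ∃ z, F z ≠ ⊤) : F p ≠ ⊤ := by
  obtain ⟨z, hz⟩ := hF
  intro htop
  have hz' := hmin z
  rw [htop, EReal.top_add_coe, top_le_iff] at hz'
  exact (EReal.add_lt_top hz (EReal.coe_ne_top _)).ne hz'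

theorem frechetSubdiff_subset_limitingSubdiff (F : E → EReal) (x : E) :
    frechetSubdiff F x ⊆ limitingSubdiff F x := fun v hv =>
  ⟨fun _ => x, fun _ => v, tendsto_const_nhds, tendsto_const_nhds, fun _ => hv,
    tendsto_const_nhds⟩

theorem HasGradientAt.const_mul_add_inner [CompleteSpace E] {u : E → ℝ} {u' p : E}
    (hu : HasGradientAt u u' p) (a d : ℝ) (c : E) :
    HasGradientAt (fun y => a * u y + ⟪y, c⟫ + d) (a • u' + c) p := by
  rw [hasGradientAt_iff_isLittleO] at hu ⊢
  refine (hu.const_mul_left a).congr_left fun y => ?_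
  simp only [inner_add_left, inner_sub_right, real_inner_smul_left, real_inner_comm c]
  ring

end FrechetSubdiff

theorem norm_smul_sub_le {E F : Type*} [NormedAddCommGroup F] [NormedSpace ℝ F]
    [SeminormedAddCommGroup E] {G : E → F} {a b : E} {c L : ℝ} (hc : 0 ≤ c)
    (hG : ‖G a - G b‖ ≤ L * ‖a - b‖) : ‖c • (G a - G b)‖ ≤ c * L * ‖a - b‖ := by
  rw [norm_smul_of_nonneg hc, mul_assoc]
  gcongr

theorem norm_inertial_residual_le {E : Type*} [NormedAddCommGroup E] [NormedSpace ℝ E]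
    {u' h' : E → E} {Lu Lh lam lam' al : ℝ} {x p x' p' : E} (hlam : 0 < lam) (hlam' : 0 ≤ lam')
    (hal : 0 ≤ al) (hu : ‖u' x - u' p‖ ≤ Lu * ‖x - p‖) (hh : ∀ z w, ‖h' z - h' w‖ ≤ Lh * ‖z - w‖) :
    ‖(1 / lam) • (u' x - u' p) + (h' p - h' x) + (al / lam) • (p' - x') +
        (al * lam' / lam) • (h' x' - h' p')‖ ≤
      (Lu / lam + Lh) * ‖x - p‖ + al / lam * (1 + lam' * Lh) * ‖x' - p'‖ :=
  calc _ ≤ ‖(1 / lam) • (u' x - u' p)‖ + ‖h' p - h' x‖ + ‖(al / lam) • (p' - x')‖ +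
        ‖(al * lam' / lam) • (h' x' - h' p')‖ := norm_add₄_le ..
    _ ≤ 1 / lam * Lu * ‖x - p‖ + Lh * ‖x - p‖ + al / lam * ‖x' - p'‖ +
        al * lam' / lam * Lh * ‖x' - p'‖ := by
      gcongr ?_ + ?_ + ?_ + ?_
      · exact norm_smul_sub_le (by positivity) hu
      · rw [norm_sub_rev x]; exact hh _ _
      · rw [norm_smul_of_nonneg (by positivity), norm_sub_rev]
      · exact norm_smul_sub_le (by positivity) (hh _ _)
    _ = _ := by ring

theorem stmt_15_general {m : ℕ} (f : EuclideanSpace ℝ (Fin m) → EReal)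
    (hproper : ∃ z, f z ≠ ⊤)
    (h : EuclideanSpace ℝ (Fin m) → ℝ)
    (h' : EuclideanSpace ℝ (Fin m) → EuclideanSpace ℝ (Fin m))
    (hdiffh : ∀ z, HasGradientAt h (h' z) z)
    (Lh : ℝ)
    (hliph : ∀ z w, ‖h' z - h' w‖ ≤ Lh * ‖z - w‖)
    (u : EuclideanSpace ℝ (Fin m) → ℝ)
    (u' : EuclideanSpace ℝ (Fin m) → EuclideanSpace ℝ (Fin m))
    (hdiffu : ∀ z, HasGradientAt u (u' z) z)
    (Lu : ℝ)
    (hlipu : ∀ z w, ‖u' z - u' w‖ ≤ Lu * ‖z - w‖)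
    (lamL lamU α : ℝ) (hlamL : 0 < lamL)
    (lam al : ℕ → ℝ)
    (hlam : ∀ n, 1 ≤ n → lamL ≤ lam n ∧ lam n ≤ lamU)
    (hal : ∀ n, 1 ≤ n → 0 ≤ al n ∧ al n ≤ α)
    (x p : ℕ → EuclideanSpace ℝ (Fin m))
    (hargmin : ∀ n, 1 ≤ n → ∀ y,
      f (p n) + ((1 / lam n * (u (p n) - u (x n) - (inner ℝ (u' (x n)) (p n - x n) : ℝ)) +
        (inner ℝ (p n) (h' (x n)) : ℝ) +
        al n / lam n * (inner ℝ (p n) (x (n - 1) - x n) : ℝ) : ℝ) : EReal) ≤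
      f y + ((1 / lam n * (u y - u (x n) - (inner ℝ (u' (x n)) (y - x n) : ℝ)) +
        (inner ℝ y (h' (x n)) : ℝ) +
        al n / lam n * (inner ℝ y (x (n - 1) - x n) : ℝ) : ℝ) : EReal))
    (hupd : ∀ n, 1 ≤ n → x (n + 1) = p n + lam n • (h' (x n) - h' (p n))) :
    ∀ n, 2 ≤ n →
      ((1 / lam n) • (u' (x n) - u' (p n)) + (h' (p n) - h' (x n)) +
        (al n / lam n) • (p (n - 1) - x (n - 1)) +
        (al n * lam (n - 1) / lam n) • (h' (x (n - 1)) - h' (p (n - 1)))) ∈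
        limitingSubdiff (fun z => f z + (h z : EReal)) (p n) ∧
      ‖(1 / lam n) • (u' (x n) - u' (p n)) + (h' (p n) - h' (x n)) +
        (al n / lam n) • (p (n - 1) - x (n - 1)) +
        (al n * lam (n - 1) / lam n) • (h' (x (n - 1)) - h' (p (n - 1)))‖ ≤
        (Lu / lam n + Lh) * ‖x n - p n‖ +
          al n / lam n * (1 + lam (n - 1) * Lh) * ‖x (n - 1) - p (n - 1)‖ := by
  intro n hn
  have hn1 : 1 ≤ n := by omega
  have hlam_pos : 0 < lam n := hlamL.trans_le (hlam n hn1).1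
  have hlam_pos' : 0 < lam (n - 1) := hlamL.trans_le (hlam (n - 1) (by omega)).1
  have hal_nonneg : 0 ≤ al n := (hal n hn1).1
  have hxn : x n = p (n - 1) + lam (n - 1) • (h' (x (n - 1)) - h' (p (n - 1))) := by
    simpa only [Nat.sub_add_cancel hn1] using hupd (n - 1) (by omega)
  set g : EuclideanSpace ℝ (Fin m) → ℝ := fun y =>
    1 / lam n * (u y - u (x n) - ⟪u' (x n), y - x n⟫) + ⟪y, h' (x n)⟫ +
      al n / lam n * ⟪y, x (n - 1) - x n⟫
  have hmin : IsLocalMin (fun y => f y + (g y : EReal)) (p n) :=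
    Eventually.of_forall (hargmin n hn1)
  have hfin : f (p n) ≠ ⊤ := ne_top_of_forall_add_coe_le (g := g) (hargmin n hn1) hproper
  -- `g y = (1 / lam n) * u y + ⟪y, c⟫ + const`
  set c := h' (x n) + (al n / lam n) • (x (n - 1) - x n) - (1 / lam n) • u' (x n)
  have hgrad : HasGradientAt g ((1 / lam n) • u' (p n) + c) (p n) := by
    convert (hdiffu (p n)).const_mul_add_inner (1 / lam n)
      (-(1 / lam n) * (u (x n) - ⟪u' (x n), x n⟫)) c using 1
    funext y
    simp only [g, c, inner_add_right, inner_sub_right, inner_smul_right,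
      real_inner_comm (u' (x n))]
    ring
  constructor
  · apply frechetSubdiff_subset_limitingSubdiff
    convert add_mem_frechetSubdiff_add (neg_mem_frechetSubdiff_of_isLocalMin_add hmin hfin hgrad)
      (hdiffh (p n)) using 1
    linear_combination (norm := module) (-(al n / lam n)) • hxn
  · exact norm_inertial_residual_le hlam_pos hlam_pos'.le hal_nonneg (hlipu _ _) hliph

theorem stmt_15 {m : ℕ} (f : EuclideanSpace ℝ (Fin m) → EReal)
    (hproper : ∃ z, f z ≠ ⊤) (hbot : ∀ z, f z ≠ ⊥)
    (hlsc : LowerSemicontinuous f)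
    (hfbdd : ∃ M : ℝ, ∀ z, (M : EReal) ≤ f z)
    (h : EuclideanSpace ℝ (Fin m) → ℝ)
    (h' : EuclideanSpace ℝ (Fin m) → EuclideanSpace ℝ (Fin m))
    (hdiffh : ∀ z, HasGradientAt h (h' z) z)
    (Lh : ℝ) (hLh : 0 ≤ Lh)
    (hliph : ∀ z w, ‖h' z - h' w‖ ≤ Lh * ‖z - w‖)
    (u : EuclideanSpace ℝ (Fin m) → ℝ)
    (u' : EuclideanSpace ℝ (Fin m) → EuclideanSpace ℝ (Fin m))
    (hdiffu : ∀ z, HasGradientAt u (u' z) z)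
    (σ : ℝ) (hσ : 0 < σ)
    (hconv : ConvexOn ℝ Set.univ (fun z => u z - σ / 2 * ‖z‖ ^ 2))
    (Lu : ℝ) (hLu : 0 < Lu)
    (hlipu : ∀ z w, ‖u' z - u' w‖ ≤ Lu * ‖z - w‖)
    (lamL lamU α : ℝ) (hlamL : 0 < lamL) (hα : 0 ≤ α)
    (lam al : ℕ → ℝ)
    (hlam : ∀ n, 1 ≤ n → lamL ≤ lam n ∧ lam n ≤ lamU)
    (hal : ∀ n, 1 ≤ n → 0 ≤ al n ∧ al n ≤ α)
    (x p : ℕ → EuclideanSpace ℝ (Fin m))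
    (hargmin : ∀ n, 1 ≤ n → ∀ y,
      f (p n) + ((1 / lam n * (u (p n) - u (x n) - (inner ℝ (u' (x n)) (p n - x n) : ℝ)) +
        (inner ℝ (p n) (h' (x n)) : ℝ) +
        al n / lam n * (inner ℝ (p n) (x (n - 1) - x n) : ℝ) : ℝ) : EReal) ≤
      f y + ((1 / lam n * (u y - u (x n) - (inner ℝ (u' (x n)) (y - x n) : ℝ)) +
        (inner ℝ y (h' (x n)) : ℝ) +
        al n / lam n * (inner ℝ y (x (n - 1) - x n) : ℝ) : ℝ) : EReal))
    (hupd : ∀ n, 1 ≤ n → x (n + 1) = p n + lam n • (h' (x n) - h' (p n))) :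
    ∀ n, 2 ≤ n →
      ((1 / lam n) • (u' (x n) - u' (p n)) + (h' (p n) - h' (x n)) +
        (al n / lam n) • (p (n - 1) - x (n - 1)) +
        (al n * lam (n - 1) / lam n) • (h' (x (n - 1)) - h' (p (n - 1)))) ∈
        limitingSubdiff (fun z => f z + (h z : EReal)) (p n) ∧
      ‖(1 / lam n) • (u' (x n) - u' (p n)) + (h' (p n) - h' (x n)) +
        (al n / lam n) • (p (n - 1) - x (n - 1)) +
        (al n * lam (n - 1) / lam n) • (h' (x (n - 1)) - h' (p (n - 1)))‖ ≤
        (Lu / lam n + Lh) * ‖x n - p n‖ +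
          al n / lam n * (1 + lam (n - 1) * Lh) * ‖x (n - 1) - p (n - 1)‖ :=
  stmt_15_general f hproper h h' hdiffh Lh hliph u u' hdiffu Lu hlipu lamL lamU α hlamL lam al hlam
    hal x p hargmin hupd
end
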